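/- Let X be path-connected, a ≠ b in X, p a path from b to a, and G a group. The map f_p : H¹(X,{a,b};G) → H¹(X,b;G) × G_a, combining the quotient map with evaluation on p, is a bijection, with inverse g_p : (α, c) ↦ c⁻¹ • η_p(α), where η_p(α) is the class of ε_p(z)•z for any cocycle z representing α. -/

import Mathlib

/-- A `G`-valued 1-cocycle of the pair `(A, Y)`: a function on paths of `X` lying in `A`,
trivial on paths lying in `Y`, invariant under homotopies (rel endpoints) lying in `A`,
and multiplicative under concatenation of paths. -/
structure NCocycle {X : Type} [TopologicalSpace X] (A Y : Set X) (G : Type) [Group G] where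
  toFun : ∀ {x y : X} (p : Path x y), Set.range p ⊆ A → G
  triv : ∀ {x y : X} (p : Path x y) (hp : Set.range p ⊆ A),
    Set.range p ⊆ Y → toFun p hp = 1
  homotopy_inv : ∀ {x y : X} (p q : Path x y) (F : p.Homotopy q),
    Set.range F ⊆ A → ∀ (hp : Set.range p ⊆ A) (hq : Set.range q ⊆ A),
      toFun p hp = toFun q hq
  mul : ∀ {x y z : X} (p : Path x y) (q : Path y z)
    (hpq : Set.range (p.trans q) ⊆ A) (hp : Set.range p ⊆ A) (hq : Set.range q ⊆ A),
      toFun (p.trans q) hpq = toFun p hp * toFun q hq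

namespace NCocycle

variable {X : Type} [TopologicalSpace X] {G : Type} [Group G]

/-- Two cocycles of `(A, Y)` are cohomologous if they differ by the action
`(c • u)(p) = c(p 0) * u(p) * c(p 1)⁻¹` of a 0-cochain `c` trivial on `Y`. -/
def Cohom {A Y : Set X} (u v : NCocycle A Y G) : Prop :=
  ∃ c : X → G, (∀ y ∈ Y, c y = 1) ∧
    ∀ {x y : X} (p : Path x y) (hp : Set.range p ⊆ A),
      v.toFun p hp = c x * u.toFun p hp * (c y)⁻¹

/-- The non-abelian cohomology set `H¹(A, Y; G)`. -/
def H1 {X : Type} [TopologicalSpace X] (A Y : Set X) (G : Type) [Group G] :=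
  Quot (Cohom (A := A) (Y := Y) (G := G))

/-- Restriction of cocycles to a smaller pair. -/
def res {A A' Y Y' : Set X} (hA : A' ⊆ A) (hY : Y' ⊆ Y) (u : NCocycle A Y G) :
    NCocycle A' Y' G where
  toFun p hp := u.toFun p (hp.trans hA)
  triv p hp h := u.triv p (hp.trans hA) (h.trans hY)
  homotopy_inv p q F hF hp hq := u.homotopy_inv p q F (hF.trans hA) _ _
  mul p q hpq hp hq := u.mul p q _ _ _

/-- Restriction map on cohomology sets. -/
def H1res {A A' Y Y' : Set X} (hA : A' ⊆ A) (hY : Y' ⊆ Y) :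
    H1 A Y G → H1 A' Y' G :=
  Quot.lift (fun u => Quot.mk _ (res hA hY u))
    (fun u v ⟨c, hc, hcv⟩ => Quot.sound
      ⟨c, fun y hy => hc y (hY hy), fun p hp => hcv p (hp.trans hA)⟩)

end NCocycle

namespace NCocycle

variable {X : Type} [TopologicalSpace X] {G : Type} [Group G]

theorem cohom_refl {A Y : Set X} (u : NCocycle A Y G) : Cohom u u :=
  ⟨fun _ => 1, fun _ _ => rfl, fun _ _ => by simp⟩

theorem cohom_symm {A Y : Set X} {u v : NCocycle A Y G} (h : Cohom u v) : Cohom v u := by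
  obtain ⟨c, hc, hcv⟩ := h
  refine ⟨fun x => (c x)⁻¹, fun y hy => by simp [hc y hy], fun {x y} q hq => ?_⟩
  rw [hcv q hq]; group

theorem cohom_trans {A Y : Set X} {u v w : NCocycle A Y G} (h1 : Cohom u v)
    (h2 : Cohom v w) : Cohom u w := by
  obtain ⟨c, hc, hcv⟩ := h1
  obtain ⟨d, hd, hdv⟩ := h2
  refine ⟨fun x => d x * c x, fun y hy => by simp [hc y hy, hd y hy], fun {x y} q hq => ?_⟩
  rw [hdv q hq, hcv q hq]; group

theorem cohom_of_mk_eq {A Y : Set X} {u v : NCocycle A Y G}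
    (h : Quot.mk (Cohom (A := A) (Y := Y) (G := G)) u = Quot.mk _ v) : Cohom u v := by
  have h' := Quot.eqvGen_exact h
  clear h
  induction h' with
  | rel x y hxy => exact hxy
  | refl _ => exact cohom_refl _
  | symm _ _ _ ih => exact cohom_symm ih
  | trans _ _ _ _ _ ih1 ih2 => exact cohom_trans ih1 ih2

theorem toFun_congr {A Y : Set X} (u : NCocycle A Y G) {x y : X} {q q' : Path x y}
    (h : q = q') (hq : Set.range q ⊆ A) (hq' : Set.range q' ⊆ A) :
    u.toFun q hq = u.toFun q' hq' := by subst h; rfl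

theorem toFun_refl {A Y : Set X} (u : NCocycle A Y G) (x : X)
    (h : Set.range (Path.refl x) ⊆ A) : u.toFun (Path.refl x) h = 1 := by
  have h' : Set.range ((Path.refl x).trans (Path.refl x)) ⊆ A := by
    rw [Path.refl_trans_refl]; exact h
  have h2 := u.mul (Path.refl x) (Path.refl x) h' h h
  rw [toFun_congr u Path.refl_trans_refl h' h] at h2
  exact left_eq_mul.mp h2

theorem toFun_const {A Y : Set X} (u : NCocycle A Y G) {x y : X} (q : Path x y)
    (hq : Set.range q ⊆ A) (hc : Set.range q ⊆ {x}) : u.toFun q hq = 1 := by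
  have hyx : y = x := hc ⟨1, q.target⟩
  subst hyx
  have hq' : q = Path.refl _ := by
    ext t
    exact hc ⟨t, rfl⟩
  rw [toFun_congr u hq' hq (hq' ▸ hq)]
  exact toFun_refl u _ _

/-- Twisting a cocycle of `(univ, Y)` by a 0-cochain, yielding a cocycle of `(univ, Y')`. -/
def twist (z : NCocycle (Set.univ : Set X) Y G) (c : X → G) (Y' : Set X)
    (htriv : ∀ {x y : X} (q : Path x y) (hq : Set.range q ⊆ Set.univ),
      Set.range q ⊆ Y' → c x * z.toFun q hq * (c y)⁻¹ = 1) :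
    NCocycle (Set.univ : Set X) Y' G where
  toFun {x y} q hq := c x * z.toFun q hq * (c y)⁻¹
  triv q hq h := htriv q hq h
  homotopy_inv {x y} q q' F hF hq hq' := by
    show c x * z.toFun q hq * (c y)⁻¹ = c x * z.toFun q' hq' * (c y)⁻¹
    rw [z.homotopy_inv q q' F hF hq hq']
  mul {x y w} q r hqr hq hr := by
    show c x * z.toFun (q.trans r) hqr * (c w)⁻¹
      = (c x * z.toFun q hq * (c y)⁻¹) * (c y * z.toFun r hr * (c w)⁻¹)
    rw [z.mul q r hqr hq hr]; group

end NCocycle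

open scoped Classical in
open NCocycle in
/-- Let X be path-connected, a ≠ b, p a path from b to a, with {a,b}
discrete.  The map f_p : H¹(X,{a,b};G) → H¹(X,b;G) × G_a, combining the quotient map with
evaluation on p, is a bijection; its inverse is g_p : (α, g) ↦ g⁻¹ • η_p(α), where η_p(α)
is the class of ε_p(z) • z for any representative z of α. -/
theorem statement12 (X : Type) [TopologicalSpace X] [PathConnectedSpace X]
    (a b : X) (hab : a ≠ b) (G : Type) [Group G] (p : Path b a)
    (hdisc : ∀ (x y : X) (q : Path x y), Set.range q ⊆ {a, b} → Set.range q ⊆ {x}) :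
    ∃ e : H1 (Set.univ : Set X) {a, b} G → G,
      (∀ w : NCocycle (Set.univ : Set X) {a, b} G,
        e (Quot.mk _ w) = w.toFun p (Set.subset_univ _)) ∧
      Function.Bijective
        (fun h : H1 (Set.univ : Set X) {a, b} G =>
          (H1res subset_rfl (by simp : ({b} : Set X) ⊆ {a, b}) h, e h)) ∧
      -- the inverse is g_p : (α, g) ↦ g⁻¹ • η_p(α):
      (∀ (z : NCocycle (Set.univ : Set X) {b} G) (g : G)
          (w : NCocycle (Set.univ : Set X) {a, b} G),
        (∀ (x y : X) (q : Path x y) (hq : Set.range q ⊆ Set.univ),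
          w.toFun q hq
            = (if x = a then g⁻¹ * z.toFun p (Set.subset_univ _) else 1) * z.toFun q hq *
                ((if y = a then g⁻¹ * z.toFun p (Set.subset_univ _) else 1))⁻¹) →
        H1res subset_rfl (by simp : ({b} : Set X) ⊆ {a, b}) (Quot.mk _ w)
            = Quot.mk _ z ∧
          e (Quot.mk _ w) = g) := by
  have key : ∀ (z : NCocycle (Set.univ : Set X) {b} G) (g : G)
      (w : NCocycle (Set.univ : Set X) {a, b} G),
      (∀ (x y : X) (q : Path x y) (hq : Set.range q ⊆ Set.univ),
        w.toFun q hq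
          = (if x = a then g⁻¹ * z.toFun p (Set.subset_univ _) else 1) * z.toFun q hq *
              ((if y = a then g⁻¹ * z.toFun p (Set.subset_univ _) else 1))⁻¹) →
      (Quot.mk _ (res subset_rfl (by simp : ({b} : Set X) ⊆ {a, b}) w)
          = Quot.mk (Cohom (A := (Set.univ : Set X)) (Y := {b}) (G := G)) z ∧
        w.toFun p (Set.subset_univ _) = g) := by
    intro z g w hw
    constructor
    · refine (Quot.sound ⟨fun x => if x = a then g⁻¹ * z.toFun p (Set.subset_univ _) else 1,
        fun y hy => ?_, fun {x y} q hq => ?_⟩).symm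
      · simp only [Set.mem_singleton_iff] at hy
        subst hy
        simp [hab.symm]
      · exact hw x y q hq
    · have := hw b a p (Set.subset_univ _)
      rw [if_neg hab.symm, if_pos rfl, one_mul] at this
      rw [this]; group
  -- the evaluation map
  refine ⟨Quot.lift (fun w => w.toFun p (Set.subset_univ _)) ?_, fun w => rfl, ⟨?_, ?_⟩,
    fun z g w hw => key z g w hw⟩
  · rintro u v ⟨c, hc, hcv⟩
    have hca : c a = 1 := hc a (by simp)
    have hcb : c b = 1 := hc b (by simp)
    simp [hcv p (Set.subset_univ _), hca, hcb]
  -- injectivity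
  · intro h1 h2 heq
    induction h1 using Quot.ind with | _ u => ?_
    induction h2 using Quot.ind with | _ v => ?_
    simp only [Prod.mk.injEq] at heq
    obtain ⟨h1, h2⟩ := heq
    obtain ⟨c, hc, hcv⟩ := cohom_of_mk_eq h1
    have hcb : c b = 1 := hc b rfl
    have hup : u.toFun p (Set.subset_univ _) = v.toFun p (Set.subset_univ _) := h2
    have hca : c a = 1 := by
      have h3 : v.toFun p (Set.subset_univ _)
          = c b * u.toFun p (Set.subset_univ _) * (c a)⁻¹ := hcv p (Set.subset_univ _)
      rw [hcb, hup, one_mul] at h3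
      have : (c a)⁻¹ = 1 := by
        simpa using h3.symm
      simpa using congrArg (·⁻¹) this
    refine Quot.sound ⟨c, ?_, fun {x y} q hq => hcv q hq⟩
    rintro y (rfl | rfl)
    · exact hca
    · exact hcb
  -- surjectivity
  · rintro ⟨α, g⟩
    induction α using Quot.ind with | _ z => ?_
    have htriv : ∀ {x y : X} (q : Path x y) (hq : Set.range q ⊆ Set.univ),
        Set.range q ⊆ ({a, b} : Set X) →
        (fun x => if x = a then g⁻¹ * z.toFun p (Set.subset_univ _) else 1) x *
          z.toFun q hq *
          ((fun x => if x = a then g⁻¹ * z.toFun p (Set.subset_univ _) else 1) y)⁻¹ = 1 := by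
      intro x y q hq hY
      have hc := hdisc x y q hY
      have hyx : y = x := hc ⟨1, q.target⟩
      subst hyx
      rw [toFun_const z q hq hc]
      group
    refine ⟨Quot.mk _
      (twist z (fun x => if x = a then g⁻¹ * z.toFun p (Set.subset_univ _) else 1)
        {a, b} htriv), ?_⟩
    obtain ⟨h1, h2⟩ := key z g
      (twist z (fun x => if x = a then g⁻¹ * z.toFun p (Set.subset_univ _) else 1)
        {a, b} htriv)
      (fun x y q hq => rfl)
    exact Prod.ext h1 h2
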